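/- arXiv:1007.1936 — 2 statements merged into one kernel-verified Lean document; each statement's English description precedes it below -/
import Mathlib

section
/- For all integers a₁, a₂, a₃, a₄ ≥ 2, setting s₂ = a₁·W₁ − W₄, one has the exact identity |[2*(a₃−2), a₂, a₄, 2*(a₁−1)]| · W₁ = W₃ + (a₂a₃a₄ − a₂a₄ − a₃a₄ + 2a₄ − 1) · s₂; in particular |[2*(a₃−2), a₂, a₄, 2*(a₁−1)]| · W₁ ≡ W₃ (mod s₂). -/
/-- Hirzebruch–Jung numerator: |[]| = 1, |[n]| = n,
|[n₁, n₂, …]| = n₁·|[n₂, …]| − |[n₃, …]|. -/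
def hj : List ℤ → ℤ
  | [] => 1
  | [n] => n
  | n :: m :: l => n * hj (m :: l) - hj l

/-! Prepending `k` twos to a nonempty list `x :: t` gives the numerator
`(k + 1)·|x :: t| − k·|t|`, and a block of `m` twos alone has numerator `m + 1`. Hence
`|[2*(a₃−2), a₂, a₄, 2*(a₁−1)]|` is an explicit polynomial in `a₁, …, a₄`, and the identity
becomes a polynomial identity once `s₂` is expanded. -/

theorem hj_replicate_two_append_cons (x : ℤ) (t : List ℤ) (k : ℕ) :
    hj (List.replicate k 2 ++ x :: t) = (k + 1) * hj (x :: t) - k * hj t := by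
  induction k using Nat.twoStepInduction with
  | zero => simp
  | one => simp [hj]
  | more k ih₀ ih₁ =>
    rw [List.replicate_succ, List.cons_append, List.replicate_succ, List.cons_append, hj,
      ← List.cons_append, ← List.replicate_succ, ih₁, ih₀]
    push_cast
    ring

theorem hj_replicate_two (m : ℕ) : hj (List.replicate m 2) = m + 1 := by
  cases m with
  | zero => rfl
  | succ m =>
    rw [List.replicate_succ', hj_replicate_two_append_cons]
    simp only [hj, mul_one, Nat.cast_add, Nat.cast_one]
    ring

theorem hj_cons_replicate_two (x : ℤ) (m : ℕ) :
    hj (x :: List.replicate m 2) = x * (m + 1) - m := by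
  cases m with
  | zero => simp [hj]
  | succ m =>
    rw [List.replicate_succ, hj, ← List.replicate_succ, hj_replicate_two, hj_replicate_two]
    push_cast
    ring

theorem hj_replicate_two_append_pair_append_replicate_two (x y : ℤ) (k m : ℕ) :
    hj (List.replicate k 2 ++ [x, y] ++ List.replicate m 2) =
      (k + 1) * (x * (y * (m + 1) - m) - (m + 1)) - k * (y * (m + 1) - m) := by
  rw [List.append_assoc, List.cons_append, List.cons_append, List.nil_append,
    hj_replicate_two_append_cons, hj, hj_cons_replicate_two, hj_replicate_two]

theorem hj_mod_s_two_general (a₁ a₂ a₃ a₄ : ℤ) (h₁ : 2 ≤ a₁) (h₃ : 2 ≤ a₃)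
    (s₂ : ℤ)
    (hs₂ : s₂ = a₁ * (a₂ * a₃ * a₄ - a₃ * a₄ + a₄ - 1) - (a₁ * a₂ * a₃ - a₂ * a₃ + a₃ - 1)) :
    hj (List.replicate (a₃ - 2).toNat 2 ++ [a₂, a₄] ++ List.replicate (a₁ - 1).toNat 2) *
        (a₂ * a₃ * a₄ - a₃ * a₄ + a₄ - 1) =
      (a₁ * a₂ * a₄ - a₁ * a₂ + a₂ - 1) +
        (a₂ * a₃ * a₄ - a₂ * a₄ - a₃ * a₄ + 2 * a₄ - 1) * s₂ ∧
    hj (List.replicate (a₃ - 2).toNat 2 ++ [a₂, a₄] ++ List.replicate (a₁ - 1).toNat 2) *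
        (a₂ * a₃ * a₄ - a₃ * a₄ + a₄ - 1) ≡
      (a₁ * a₂ * a₄ - a₁ * a₂ + a₂ - 1) [ZMOD s₂] := by
  have hk : ((a₃ - 2).toNat : ℤ) = a₃ - 2 := Int.toNat_of_nonneg (by omega)
  have hm : ((a₁ - 1).toNat : ℤ) = a₁ - 1 := Int.toNat_of_nonneg (by omega)
  have identity :
      hj (List.replicate (a₃ - 2).toNat 2 ++ [a₂, a₄] ++ List.replicate (a₁ - 1).toNat 2) *
          (a₂ * a₃ * a₄ - a₃ * a₄ + a₄ - 1) =
        (a₁ * a₂ * a₄ - a₁ * a₂ + a₂ - 1) +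
          (a₂ * a₃ * a₄ - a₂ * a₄ - a₃ * a₄ + 2 * a₄ - 1) * s₂ := by
    rw [hj_replicate_two_append_pair_append_replicate_two, hk, hm, hs₂]
    ring
  refine ⟨identity, ?_⟩
  rw [Int.ModEq, identity, Int.add_mul_emod_self_right]

theorem hj_mod_s_two (a₁ a₂ a₃ a₄ : ℤ) (h₁ : 2 ≤ a₁) (h₂ : 2 ≤ a₂) (h₃ : 2 ≤ a₃) (h₄ : 2 ≤ a₄)
    (s₂ : ℤ)
    (hs₂ : s₂ = a₁ * (a₂ * a₃ * a₄ - a₃ * a₄ + a₄ - 1) - (a₁ * a₂ * a₃ - a₂ * a₃ + a₃ - 1)) :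
    hj (List.replicate (a₃ - 2).toNat 2 ++ [a₂, a₄] ++ List.replicate (a₁ - 1).toNat 2) *
        (a₂ * a₃ * a₄ - a₃ * a₄ + a₄ - 1) =
      (a₁ * a₂ * a₄ - a₁ * a₂ + a₂ - 1) +
        (a₂ * a₃ * a₄ - a₂ * a₄ - a₃ * a₄ + 2 * a₄ - 1) * s₂ ∧
    hj (List.replicate (a₃ - 2).toNat 2 ++ [a₂, a₄] ++ List.replicate (a₁ - 1).toNat 2) *
        (a₂ * a₃ * a₄ - a₃ * a₄ + a₄ - 1) ≡
      (a₁ * a₂ * a₄ - a₁ * a₂ + a₂ - 1) [ZMOD s₂] :=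
  hj_mod_s_two_general a₁ a₂ a₃ a₄ h₁ h₃ s₂ hs₂
end

section
/- For every integer b ≥ 2, one has |[b, 2*7, 3, 2*(b−2)]| = 9b² − 9b + 1, i.e. the Hirzebruch–Jung numerator of the list b, seven 2's, 3, followed by b−2 twos equals 9b² − 9b + 1 (so the chain [3, b, 2*7, 3, 2*(b−2)] contracts to a singularity of type (1/(27b²−36b+4))(1, 9b²−9b+1)). -/
/-! A run of `k` twos in front of a chain acts linearly on the pair `(|[x, t]|, |[t]|)`, with
coefficients `k + 1` and `k`. Peeling off `b` and applying this to the seven twos reduces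
everything to `|[3, 2*(b−2)]| = 2b − 1` and `|[2*(b−2)]| = b − 1`. -/

open List

theorem hj_replicate_two_append (x : ℤ) (t : List ℤ) :
    ∀ k : ℕ, hj (replicate k 2 ++ x :: t) = (k + 1) * hj (x :: t) - k * hj t
  | 0 => by simp
  | 1 => by simp [hj]
  | k + 2 => by
    calc hj (replicate (k + 2) 2 ++ x :: t)
        = 2 * hj (replicate (k + 1) 2 ++ x :: t) - hj (replicate k 2 ++ x :: t) :=
          hj.eq_3 _ _ _
      _ = (↑(k + 2) + 1) * hj (x :: t) - ↑(k + 2) * hj t := by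
          rw [hj_replicate_two_append x t (k + 1), hj_replicate_two_append x t k]
          push_cast
          ring

theorem hj_replicate_two_s15 : ∀ n : ℕ, hj (replicate n 2) = n + 1
  | 0 => rfl
  | n + 1 => by
    rw [replicate_succ', hj_replicate_two_append]
    simp only [hj]
    push_cast
    ring

theorem hj_cons_replicate_two_s15 (a : ℤ) : ∀ k : ℕ, hj (a :: replicate k 2) = (a - 1) * k + a
  | 0 => by simp [hj]
  | k + 1 => by
    rw [replicate_succ, hj, ← replicate_succ, hj_replicate_two_s15, hj_replicate_two_s15]
    push_cast
    ring

theorem hj_type_Sb (b : ℤ) (hb : 2 ≤ b) :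
    hj ([b] ++ List.replicate 7 2 ++ [3] ++ List.replicate (b - 2).toNat 2) =
      9 * b ^ 2 - 9 * b + 1 := by
  set R : List ℤ := replicate (b - 2).toNat 2
  have hR : hj R = b - 1 := by
    rw [hj_replicate_two_s15, Int.toNat_of_nonneg (by omega)]
    ring
  have h3R : hj (3 :: R) = 2 * b - 1 := by
    rw [hj_cons_replicate_two_s15, Int.toNat_of_nonneg (by omega)]
    ring
  calc hj ([b] ++ replicate 7 2 ++ [3] ++ R)
      = b * hj (replicate 7 2 ++ 3 :: R) - hj (replicate 6 2 ++ 3 :: R) := hj.eq_3 _ _ _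
    _ = 9 * b ^ 2 - 9 * b + 1 := by
        rw [hj_replicate_two_append, hj_replicate_two_append, hR, h3R]
        push_cast
        ring
end
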